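/- Let f be differentiable on I° with f' integrable on [a,b], q > 1, 1/p + 1/q = 1, |f'|^q strongly convex on [a,b] with modulus c > 0, |f'| ≤ M, and M^q ≥ c(b-a)²/24. Then |f((a+b)/2) - (1/(b-a))∫_a^b f(u) du| ≤ ((b-a)/2)·(1/(p+1))^{1/p}·(M^q - c(b-a)²/24)^{1/q}. -/

import Mathlib

/-!
Montgomery's identity at the midpoint `m = (a + b) / 2`,
`(b - a) f m - ∫ f = ∫ t in a..m, (t - a) f' t + ∫ t in m..b, (t - b) f' t`,
bounds the deviation of `f m` from the mean of `f` by the integral of `|f'|` against the tent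
`min (t - a) (b - t)`. Hölder's inequality splits this into `∫ tent ^ p`, which equals
`(b - a) L ^ p / (p + 1)` with `L = (b - a) / 2`, and `∫ |f'| ^ q`. Strong convexity of
`|f'| ^ q`, with `|f'| ≤ M` at the endpoints, gives `|f' t| ^ q ≤ M ^ q - c (b - t) (t - a)`,
hence `∫ |f'| ^ q ≤ (b - a) (M ^ q - c (b - a) ^ 2 / 6)`.
-/

open MeasureTheory intervalIntegral Set

def StronglyConvexOnWith (a b c : ℝ) (g : ℝ → ℝ) : Prop :=
  ∀ x ∈ Set.Icc a b, ∀ y ∈ Set.Icc a b, ∀ t ∈ Set.Ioo (0:ℝ) 1,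
    g (t * x + (1 - t) * y) ≤ t * g x + (1 - t) * g y - c * t * (1 - t) * (x - y) ^ 2

theorem integral_sub_mul_deriv {F F' : ℝ → ℝ} {a b : ℝ} (hF : ContinuousOn F (uIcc a b))
    (hF' : ∀ x ∈ Ioo (min a b) (max a b), HasDerivAt F (F' x) x)
    (hint : IntervalIntegrable F' volume a b) :
    ∫ t in a..b, (t - a) * F' t = (b - a) * F b - ∫ t in a..b, F t := by
  rw [integral_mul_deriv_eq_deriv_mul_of_hasDerivAt (u := fun t ↦ t - a) (by fun_prop) hF
    (fun x _ ↦ (hasDerivAt_id x).sub_const a) hF' intervalIntegrable_const hint]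
  simp

theorem montgomery_identity {F F' : ℝ → ℝ} {a b x : ℝ} (hax : a ≤ x) (hxb : x ≤ b)
    (hF : ContinuousOn F (Icc a b)) (hF' : ∀ y ∈ Ioo a b, HasDerivAt F (F' y) y)
    (hint : IntervalIntegrable F' volume a b) :
    (b - a) * F x - ∫ t in a..b, F t =
      (∫ t in a..x, (t - a) * F' t) + ∫ t in x..b, (t - b) * F' t := by
  have hsub : uIcc a x ⊆ Icc a b := by rw [uIcc_of_le hax]; exact Icc_subset_Icc le_rfl hxb
  have hsub' : uIcc b x ⊆ Icc a b := by rw [uIcc_of_ge hxb]; exact Icc_subset_Icc hax le_rfl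
  have hab : uIcc a b = Icc a b := uIcc_of_le (hax.trans hxb)
  have h₁ := integral_sub_mul_deriv (hF.mono hsub)
    (fun y hy ↦ hF' y ⟨by simp_all, by simp_all; linarith⟩) (hint.mono_set (hab ▸ hsub))
  have h₂ := integral_sub_mul_deriv (hF.mono hsub')
    (fun y hy ↦ hF' y ⟨by simp_all; linarith, by simp_all⟩) (hint.mono_set (hab ▸ hsub'))
  rw [h₁, integral_symm b x, h₂, integral_symm x b, ← integral_add_adjacent_intervals
    (hF.mono hsub).intervalIntegrable (hF.mono hsub').intervalIntegrable.symm]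
  ring

theorem abs_midpoint_kernel_integral_le {g : ℝ → ℝ} {a b : ℝ} (hab : a ≤ b)
    (hg : IntervalIntegrable g volume a b) :
    |(∫ t in a..(a + b) / 2, (t - a) * g t) + ∫ t in (a + b) / 2..b, (t - b) * g t| ≤
      ∫ t in a..b, min (t - a) (b - t) * |g t| := by
  set m := (a + b) / 2 with hm_def
  have ham : a ≤ m := by linarith
  have hmb : m ≤ b := by linarith
  have hm : m ∈ uIcc a b := by rw [uIcc_of_le hab]; exact ⟨ham, hmb⟩
  have hK : IntervalIntegrable (fun t ↦ min (t - a) (b - t) * |g t|) volume a b :=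
    hg.abs.continuousOn_mul (by fun_prop)
  have h₁ : |∫ t in a..m, (t - a) * g t| ≤ ∫ t in a..m, min (t - a) (b - t) * |g t| := by
    refine (abs_integral_le_integral_abs ham).trans_eq (integral_congr fun t ht ↦ ?_)
    rw [uIcc_of_le ham] at ht
    simp only [abs_mul, abs_of_nonneg (sub_nonneg.2 ht.1),
      min_eq_left (show t - a ≤ b - t by linarith [ht.2])]
  have h₂ : |∫ t in m..b, (t - b) * g t| ≤ ∫ t in m..b, min (t - a) (b - t) * |g t| := by
    refine (abs_integral_le_integral_abs hmb).trans_eq (integral_congr fun t ht ↦ ?_)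
    rw [uIcc_of_le hmb] at ht
    simp only [abs_mul, abs_of_nonpos (sub_nonpos.2 ht.2), neg_sub,
      min_eq_right (show b - t ≤ t - a by linarith [ht.1])]
  rw [← integral_add_adjacent_intervals (hK.mono_set (uIcc_subset_uIcc left_mem_uIcc hm))
    (hK.mono_set (uIcc_subset_uIcc hm right_mem_uIcc))]
  exact (abs_add_le _ _).trans (add_le_add h₁ h₂)

theorem abs_midpoint_sub_average_le {f f' : ℝ → ℝ} {a b : ℝ} (hab : a < b)
    (hf : ∀ x ∈ Ioo a b, HasDerivAt f (f' x) x) (hf' : IntervalIntegrable f' volume a b) :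
    |f ((a + b) / 2) - (1 / (b - a)) * ∫ u in a..b, f u| ≤
      (1 / (b - a)) * ∫ t in a..b, min (t - a) (b - t) * |f' t| := by
  set m := (a + b) / 2 with hm_def
  have hm : m ∈ Ioo a b := ⟨by linarith, by linarith⟩
  -- `f` itself need not be continuous at `a` and `b`; its primitive representation `F` is.
  set F : ℝ → ℝ := fun u ↦ f m + ∫ t in m..u, f' t
  have hFf : EqOn F f (Ioo a b) := fun x hx ↦ by
    have hsub : uIcc m x ⊆ Ioo a b := ordConnected_Ioo.uIcc_subset hm hx
    simp only [F, integral_eq_sub_of_hasDerivAt (fun y hy ↦ hf y (hsub hy))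
      (hf'.mono_set ((hsub.trans Ioo_subset_Icc_self).trans (uIcc_of_le hab.le).symm.subset))]
    ring
  have hFc : ContinuousOn F (Icc a b) := by
    rw [← uIcc_of_le hab.le]
    exact continuousOn_const.add (continuousOn_primitive_interval' hf'
      ((uIcc_of_le hab.le).symm ▸ Ioo_subset_Icc_self hm))
  have hF' : ∀ x ∈ Ioo a b, HasDerivAt F (f' x) x := fun x hx ↦
    (hf x hx).congr_of_eventuallyEq (Filter.eventually_of_mem (Ioo_mem_nhds hx.1 hx.2) hFf)
  have hint : ∫ u in a..b, f u = ∫ u in a..b, F u := by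
    simp only [integral_of_le hab.le, integral_Ioc_eq_integral_Ioo]
    exact setIntegral_congr_fun measurableSet_Ioo fun x hx ↦ (hFf hx).symm
  have hsplit : f m - (1 / (b - a)) * ∫ u in a..b, f u =
      (1 / (b - a)) * ((b - a) * F m - ∫ u in a..b, F u) := by
    have : b - a ≠ 0 := (sub_pos.2 hab).ne'
    rw [hint, ← hFf hm]
    field_simp
  rw [hsplit, montgomery_identity hm.1.le hm.2.le hFc hF' hf', abs_mul,
    abs_of_pos (one_div_pos.2 (sub_pos.2 hab))]
  gcongr
  exact abs_midpoint_kernel_integral_le hab.le hf'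

theorem StronglyConvexOnWith.le_sub_mul {a b c N : ℝ} {g : ℝ → ℝ}
    (hg : StronglyConvexOnWith a b c g) (ha : g a ≤ N) (hb : g b ≤ N) {x : ℝ}
    (hx : x ∈ Icc a b) : g x ≤ N - c * ((b - x) * (x - a)) := by
  rcases hx.1.eq_or_lt with rfl | hax
  · simpa using ha
  rcases hx.2.eq_or_lt with rfl | hxb
  · simpa using hb
  have hab : a ≤ b := hax.le.trans hxb.le
  have hba : 0 < b - a := by linarith
  set s := (b - x) / (b - a) with hs_def
  have hs : s ∈ Ioo (0 : ℝ) 1 :=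
    ⟨div_pos (by linarith) hba, (div_lt_one hba).2 (by linarith)⟩
  have key := hg a (left_mem_Icc.2 hab) b (right_mem_Icc.2 hab) s hs
  rw [show s * a + (1 - s) * b = x by rw [hs_def]; field_simp; ring] at key
  have hcs : c * s * (1 - s) * (a - b) ^ 2 = c * ((b - x) * (x - a)) := by
    rw [hs_def]; field_simp; ring
  nlinarith [hs.1, hs.2]

theorem integral_sub_mul_sub (a b : ℝ) : ∫ x in a..b, (b - x) * (x - a) = (b - a) ^ 3 / 6 := by
  have h : ∀ x : ℝ, (b - x) * (x - a) = (a + b) * x - a * b - x ^ 2 := fun x ↦ by ring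
  simp only [h]
  rw [intervalIntegral.integral_sub, intervalIntegral.integral_sub,
    intervalIntegral.integral_const_mul]
  · simp
    ring
  all_goals exact Continuous.intervalIntegrable (by fun_prop) _ _

theorem StronglyConvexOnWith.integral_le {a b c N : ℝ} {g : ℝ → ℝ}
    (hg : StronglyConvexOnWith a b c g) (hab : a ≤ b) (hgi : IntervalIntegrable g volume a b)
    (ha : g a ≤ N) (hb : g b ≤ N) :
    ∫ x in a..b, g x ≤ (b - a) * (N - c * (b - a) ^ 2 / 6) := by
  have hpoly : IntervalIntegrable (fun x ↦ c * ((b - x) * (x - a))) volume a b :=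
    Continuous.intervalIntegrable (by fun_prop) _ _
  calc ∫ x in a..b, g x ≤ ∫ x in a..b, (N - c * ((b - x) * (x - a))) :=
        integral_mono_on hab hgi (intervalIntegrable_const.sub hpoly)
          fun x hx ↦ hg.le_sub_mul ha hb hx
    _ = (b - a) * (N - c * (b - a) ^ 2 / 6) := by
        rw [intervalIntegral.integral_sub intervalIntegrable_const hpoly,
          intervalIntegral.integral_const_mul,
          integral_sub_mul_sub, intervalIntegral.integral_const, smul_eq_mul]
        ring

theorem integral_min_sub_rpow {a b p : ℝ} (hab : a ≤ b) (hp : -1 < p) :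
    ∫ t in a..b, min (t - a) (b - t) ^ p = (b - a) * (((b - a) / 2) ^ p / (p + 1)) := by
  set m := (a + b) / 2 with hm_def
  have ham : a ≤ m := by linarith
  have hmb : m ≤ b := by linarith
  have h₁ : EqOn (fun t ↦ min (t - a) (b - t) ^ p) (fun t ↦ (t - a) ^ p) (uIcc a m) := by
    intro t ht
    rw [uIcc_of_le ham] at ht
    simp only [min_eq_left (show t - a ≤ b - t by linarith [ht.2])]
  have h₂ : EqOn (fun t ↦ min (t - a) (b - t) ^ p) (fun t ↦ (b - t) ^ p) (uIcc m b) := by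
    intro t ht
    rw [uIcc_of_le hmb] at ht
    simp only [min_eq_right (show b - t ≤ t - a by linarith [ht.1])]
  have i₁ : IntervalIntegrable (fun t ↦ (t - a) ^ p) volume a m := by
    simpa using (intervalIntegrable_rpow' hp (a := 0) (b := m - a)).comp_sub_right a
  have i₂ : IntervalIntegrable (fun t ↦ (b - t) ^ p) volume m b := by
    simpa using (intervalIntegrable_rpow' hp (a := b - m) (b := 0)).comp_sub_left b
  have hp1 : p + 1 ≠ 0 := by linarith
  rw [← integral_add_adjacent_intervals
      (i₁.congr (h₁.symm.mono uIoc_subset_uIcc)) (i₂.congr (h₂.symm.mono uIoc_subset_uIcc)),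
    integral_congr h₁, integral_congr h₂,
    intervalIntegral.integral_comp_sub_right (fun t ↦ t ^ p),
    intervalIntegral.integral_comp_sub_left (fun t ↦ t ^ p), integral_rpow (Or.inl hp),
    integral_rpow (Or.inl hp), sub_self, sub_self, Real.zero_rpow hp1,
    show m - a = (b - a) / 2 by linarith, show b - m = (b - a) / 2 by linarith,
    Real.rpow_add_one' (by linarith) hp1]
  field_simp
  ring

theorem integral_mul_le_of_integral_rpow_le {p q a b G H : ℝ} {g h : ℝ → ℝ}
    (hpq : p.HolderConjugate q) (hab : a ≤ b)
    (hg₀ : ∀ t ∈ Ioc a b, 0 ≤ g t) (hh₀ : ∀ t ∈ Ioc a b, 0 ≤ h t)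
    (hg : MemLp g (ENNReal.ofReal p) (volume.restrict (Ioc a b)))
    (hh : MemLp h (ENNReal.ofReal q) (volume.restrict (Ioc a b)))
    (hG₀ : 0 ≤ G) (hH₀ : 0 ≤ H)
    (hG : ∫ t in a..b, g t ^ p ≤ (b - a) * G) (hH : ∫ t in a..b, h t ^ q ≤ (b - a) * H) :
    ∫ t in a..b, g t * h t ≤ (b - a) * G ^ (1 / p) * H ^ (1 / q) := by
  rw [integral_of_le hab] at hG hH ⊢
  have hgp : 0 ≤ ∫ t in Ioc a b, g t ^ p :=
    setIntegral_nonneg measurableSet_Ioc fun t ht ↦ Real.rpow_nonneg (hg₀ t ht) p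
  have hhq : 0 ≤ ∫ t in Ioc a b, h t ^ q :=
    setIntegral_nonneg measurableSet_Ioc fun t ht ↦ Real.rpow_nonneg (hh₀ t ht) q
  have hba : 0 ≤ b - a := sub_nonneg.2 hab
  calc ∫ t in Ioc a b, g t * h t
      ≤ (∫ t in Ioc a b, g t ^ p) ^ (1 / p) * (∫ t in Ioc a b, h t ^ q) ^ (1 / q) :=
        integral_mul_le_Lp_mul_Lq_of_nonneg hpq (ae_restrict_of_forall_mem measurableSet_Ioc hg₀)
          (ae_restrict_of_forall_mem measurableSet_Ioc hh₀) hg hh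
    _ ≤ ((b - a) * G) ^ (1 / p) * ((b - a) * H) ^ (1 / q) := by
        gcongr
        · exact one_div_nonneg.2 hpq.nonneg
        · exact one_div_nonneg.2 hpq.symm.nonneg
    _ = (b - a) ^ (1 / p + 1 / q) * G ^ (1 / p) * H ^ (1 / q) := by
        rw [Real.mul_rpow hba hG₀, Real.mul_rpow hba hH₀,
          Real.rpow_add' hba (by simp [hpq.inv_add_inv_eq_one])]
        ring
    _ = (b - a) * G ^ (1 / p) * H ^ (1 / q) := by
        rw [one_div, one_div, hpq.inv_add_inv_eq_one, Real.rpow_one]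

theorem memLp_min_sub (a b : ℝ) (p : ENNReal) :
    MemLp (fun t ↦ min (t - a) (b - t)) p (volume.restrict (Ioc a b)) :=
  .of_bound (by fun_prop) (b - a) <| ae_restrict_of_forall_mem measurableSet_Ioc fun t ht ↦ by
    rw [Real.norm_eq_abs, abs_of_nonneg (le_min (sub_nonneg.2 ht.1.le) (sub_nonneg.2 ht.2))]
    exact (min_le_left _ _).trans (by linarith [ht.2])

theorem integral_min_sub_mul_le {p q a b H : ℝ} {h : ℝ → ℝ} (hpq : p.HolderConjugate q)
    (hab : a ≤ b) (hh₀ : ∀ t ∈ Ioc a b, 0 ≤ h t)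
    (hh : MemLp h (ENNReal.ofReal q) (volume.restrict (Ioc a b))) (hH₀ : 0 ≤ H)
    (hH : ∫ t in a..b, h t ^ q ≤ (b - a) * H) :
    ∫ t in a..b, min (t - a) (b - t) * h t ≤
      (b - a) * ((b - a) / 2 * (1 / (p + 1)) ^ (1 / p)) * H ^ (1 / q) := by
  have hp : 0 < p := hpq.pos
  have hL : 0 ≤ (b - a) / 2 := by linarith
  have hpow : (((b - a) / 2) ^ p / (p + 1)) ^ (1 / p) = (b - a) / 2 * (1 / (p + 1)) ^ (1 / p) := by
    rw [div_eq_mul_one_div, Real.mul_rpow (by positivity) (by positivity),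
      ← Real.rpow_mul hL, mul_one_div_cancel hp.ne', Real.rpow_one]
  rw [← hpow]
  exact integral_mul_le_of_integral_rpow_le hpq hab
    (fun t ht ↦ le_min (sub_nonneg.2 ht.1.le) (sub_nonneg.2 ht.2)) hh₀ (memLp_min_sub a b _) hh
    (by positivity) hH₀ (integral_min_sub_rpow hab (by linarith)).le hH

theorem IntervalIntegrable.memLp_abs_of_abs_le {g : ℝ → ℝ} {a b M : ℝ}
    (hg : IntervalIntegrable g volume a b) (hM : ∀ t ∈ Ioc a b, |g t| ≤ M) (p : ENNReal) :
    MemLp (fun t ↦ |g t|) p (volume.restrict (Ioc a b)) :=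
  .of_bound hg.1.aestronglyMeasurable.norm M <| ae_restrict_of_forall_mem measurableSet_Ioc
    fun t ht ↦ by simpa using hM t ht

theorem IntervalIntegrable.abs_rpow_of_abs_le {g : ℝ → ℝ} {a b M q : ℝ} (hab : a ≤ b)
    (hg : IntervalIntegrable g volume a b) (hM : ∀ t ∈ Ioc a b, |g t| ≤ M) (hq : 0 < q) :
    IntervalIntegrable (fun t ↦ |g t| ^ q) volume a b := by
  rw [intervalIntegrable_iff_integrableOn_Ioc_of_le hab]
  have h := (hg.memLp_abs_of_abs_le hM (ENNReal.ofReal q)).integrable_norm_rpow (by simpa) (by simp)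
  simp only [Real.norm_eq_abs, abs_abs, ENNReal.toReal_ofReal hq.le] at h
  exact h

theorem stmt4 (I : Set ℝ) (hI : Convex ℝ I) (f f' : ℝ → ℝ) (a b c M p q : ℝ)
    (ha : a ∈ I) (hb : b ∈ I) (hab : a < b) (hc : 0 < c)
    (hq : 1 < q) (hpq : 1 / p + 1 / q = 1)
    (hdiff : ∀ y ∈ interior I, HasDerivAt f (f' y) y)
    (hint : IntervalIntegrable f' volume a b)
    (hsc : StronglyConvexOnWith a b c (fun u => |f' u| ^ q))
    (hM : ∀ u ∈ Set.Icc a b, |f' u| ≤ M)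
    (hMm : c * (b - a) ^ 2 / 24 ≤ M ^ q) :
    |f ((a + b) / 2) - (1 / (b - a)) * ∫ u in a..b, f u| ≤
      ((b - a) / 2) * (1 / (p + 1)) ^ (1 / p) * (M ^ q - c * (b - a) ^ 2 / 24) ^ (1 / q) := by
  have hIoo : Ioo a b ⊆ interior I := by
    rw [← interior_Icc]
    exact interior_mono (hI.ordConnected.out ha hb)
  have hpq' : p.HolderConjugate q :=
    (Real.holderConjugate_iff.2 ⟨hq, by simpa [one_div, add_comm] using hpq⟩).symm
  have hM' : ∀ t ∈ Ioc a b, |f' t| ≤ M := fun t ht ↦ hM t (Ioc_subset_Icc_self ht)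
  have hMq : ∀ u ∈ Icc a b, |f' u| ^ q ≤ M ^ q := fun u hu ↦
    Real.rpow_le_rpow (abs_nonneg _) (hM u hu) (by linarith)
  have hf'q : ∫ t in a..b, |f' t| ^ q ≤ (b - a) * (M ^ q - c * (b - a) ^ 2 / 24) := by
    refine (hsc.integral_le hab.le (hint.abs_rpow_of_abs_le hab.le hM' (by linarith))
      (hMq a (left_mem_Icc.2 hab.le)) (hMq b (right_mem_Icc.2 hab.le))).trans ?_
    have : 0 < b - a := sub_pos.2 hab
    gcongr
    norm_num
  calc |f ((a + b) / 2) - (1 / (b - a)) * ∫ u in a..b, f u|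
      ≤ (1 / (b - a)) * ∫ t in a..b, min (t - a) (b - t) * |f' t| :=
        abs_midpoint_sub_average_le hab (fun x hx ↦ hdiff x (hIoo hx)) hint
    _ ≤ (1 / (b - a)) * ((b - a) * ((b - a) / 2 * (1 / (p + 1)) ^ (1 / p)) *
          (M ^ q - c * (b - a) ^ 2 / 24) ^ (1 / q)) := by
        gcongr
        exact integral_min_sub_mul_le hpq' hab.le (fun t _ ↦ abs_nonneg (f' t))
          (hint.memLp_abs_of_abs_le hM' _) (sub_nonneg.2 hMm) hf'q
    _ = ((b - a) / 2) * (1 / (p + 1)) ^ (1 / p) * (M ^ q - c * (b - a) ^ 2 / 24) ^ (1 / q) := by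
        field_simp
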